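/- Let p < q in [0,1], let X ∼ Binomial(N,p) and Y ∼ Binomial(N,q) be independent. Then Pr[X < Y] ≥ (1 − exp(−χ²(p,q)·N/12))². -/
import Mathlib

/-- Symmetric chi-square divergence of `Ber p` and `Ber q`. -/
noncomputable def chiSq (p q : ℝ) : ℝ := (p - q) ^ 2 / ((p + q) * (2 - (p + q)))

/-- Binomial(N, p) probability mass at k. -/
noncomputable def binomPMF (N : ℕ) (p : ℝ) (k : ℕ) : ℝ :=
  (N.choose k : ℝ) * p ^ k * (1 - p) ^ (N - k)

lemma binomPMF_nonneg {N : ℕ} {p : ℝ} (hp : 0 ≤ p) (hp1 : p ≤ 1) (k : ℕ) :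
    0 ≤ binomPMF N p k := by
  unfold binomPMF
  have h1 : (0:ℝ) ≤ 1 - p := by linarith
  positivity

lemma binomPMF_mgf (N : ℕ) (p x : ℝ) :
    ∑ k ∈ Finset.range (N + 1), binomPMF N p k * x ^ k = (p * x + (1 - p)) ^ N := by
  rw [add_pow]
  refine Finset.sum_congr rfl fun k _ => ?_
  unfold binomPMF
  rw [mul_pow]
  ring

lemma binomPMF_sum (N : ℕ) (p : ℝ) :
    ∑ k ∈ Finset.range (N + 1), binomPMF N p k = 1 := by
  have h := binomPMF_mgf N p 1
  simp only [mul_one, one_pow] at h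
  simpa using h

lemma binomPMF_reflect {N k : ℕ} (hk : k ≤ N) (p : ℝ) :
    binomPMF N p (N - k) = binomPMF N (1 - p) k := by
  unfold binomPMF
  rw [Nat.choose_symm hk, Nat.sub_sub_self hk]
  ring_nf

lemma tail_upper (N : ℕ) (p t a : ℝ) (hp : 0 ≤ p) (hp1 : p ≤ 1) (ht : 0 ≤ t) :
    ∑ k ∈ Finset.range (N + 1), (if a ≤ (k : ℝ) then binomPMF N p k else 0)
      ≤ Real.exp ((N : ℝ) * (p * (Real.exp t - 1)) - t * a) := by
  have step1 : ∑ k ∈ Finset.range (N + 1), (if a ≤ (k : ℝ) then binomPMF N p k else 0)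
      ≤ ∑ k ∈ Finset.range (N + 1), binomPMF N p k * (Real.exp t) ^ k * Real.exp (-(t * a)) := by
    refine Finset.sum_le_sum fun k _ => ?_
    have hnn := binomPMF_nonneg hp hp1 (N := N) k
    have hkey : binomPMF N p k * (Real.exp t) ^ k * Real.exp (-(t * a))
        = binomPMF N p k * Real.exp (t * k - t * a) := by
      rw [← Real.exp_nat_mul, mul_assoc, ← Real.exp_add]
      ring_nf
    split_ifs with h
    · rw [hkey]
      refine le_mul_of_one_le_right hnn ?_
      rw [← Real.exp_zero]
      apply Real.exp_le_exp.mpr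
      have : t * a ≤ t * k := mul_le_mul_of_nonneg_left h ht
      linarith
    · rw [hkey]
      positivity
  have step2 : ∑ k ∈ Finset.range (N + 1), binomPMF N p k * (Real.exp t) ^ k * Real.exp (-(t * a))
      = (p * Real.exp t + (1 - p)) ^ N * Real.exp (-(t * a)) := by
    rw [← Finset.sum_mul, binomPMF_mgf]
  have step3 : (p * Real.exp t + (1 - p)) ^ N ≤ Real.exp ((N : ℝ) * (p * (Real.exp t - 1))) := by
    have hb : 0 ≤ p * Real.exp t + (1 - p) := by
      have := Real.exp_pos t
      nlinarith
    have h1 : p * Real.exp t + (1 - p) ≤ Real.exp (p * (Real.exp t - 1)) := by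
      have := Real.add_one_le_exp (p * (Real.exp t - 1))
      linarith
    calc (p * Real.exp t + (1 - p)) ^ N ≤ (Real.exp (p * (Real.exp t - 1))) ^ N :=
          pow_le_pow_left₀ hb h1 N
      _ = Real.exp ((N : ℝ) * (p * (Real.exp t - 1))) := (Real.exp_nat_mul _ N).symm
  calc ∑ k ∈ Finset.range (N + 1), (if a ≤ (k : ℝ) then binomPMF N p k else 0)
      ≤ (p * Real.exp t + (1 - p)) ^ N * Real.exp (-(t * a)) := by rw [← step2]; exact step1
    _ ≤ Real.exp ((N : ℝ) * (p * (Real.exp t - 1))) * Real.exp (-(t * a)) := by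
        exact mul_le_mul_of_nonneg_right step3 (Real.exp_pos _).le
    _ = Real.exp ((N : ℝ) * (p * (Real.exp t - 1)) - t * a) := by
        rw [← Real.exp_add]; ring_nf

lemma tail_lower (N : ℕ) (p t a : ℝ) (hp : 0 ≤ p) (hp1 : p ≤ 1) (ht : 0 ≤ t) :
    ∑ k ∈ Finset.range (N + 1), (if (k : ℝ) ≤ a then binomPMF N p k else 0)
      ≤ Real.exp ((N : ℝ) * (p * (Real.exp (-t) - 1)) + t * a) := by
  have step1 : ∑ k ∈ Finset.range (N + 1), (if (k : ℝ) ≤ a then binomPMF N p k else 0)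
      ≤ ∑ k ∈ Finset.range (N + 1), binomPMF N p k * (Real.exp (-t)) ^ k * Real.exp (t * a) := by
    refine Finset.sum_le_sum fun k _ => ?_
    have hnn := binomPMF_nonneg hp hp1 (N := N) k
    have hkey : binomPMF N p k * (Real.exp (-t)) ^ k * Real.exp (t * a)
        = binomPMF N p k * Real.exp (t * a - t * k) := by
      rw [← Real.exp_nat_mul, mul_assoc, ← Real.exp_add]
      ring_nf
    split_ifs with h
    · rw [hkey]
      refine le_mul_of_one_le_right hnn ?_
      rw [← Real.exp_zero]
      apply Real.exp_le_exp.mpr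
      have : t * k ≤ t * a := mul_le_mul_of_nonneg_left h ht
      linarith
    · rw [hkey]
      positivity
  have step2 : ∑ k ∈ Finset.range (N + 1), binomPMF N p k * (Real.exp (-t)) ^ k * Real.exp (t * a)
      = (p * Real.exp (-t) + (1 - p)) ^ N * Real.exp (t * a) := by
    rw [← Finset.sum_mul, binomPMF_mgf]
  have step3 : (p * Real.exp (-t) + (1 - p)) ^ N ≤ Real.exp ((N : ℝ) * (p * (Real.exp (-t) - 1))) := by
    have hb : 0 ≤ p * Real.exp (-t) + (1 - p) := by
      have := Real.exp_pos (-t)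
      nlinarith
    have h1 : p * Real.exp (-t) + (1 - p) ≤ Real.exp (p * (Real.exp (-t) - 1)) := by
      have := Real.add_one_le_exp (p * (Real.exp (-t) - 1))
      linarith
    calc (p * Real.exp (-t) + (1 - p)) ^ N ≤ (Real.exp (p * (Real.exp (-t) - 1))) ^ N :=
          pow_le_pow_left₀ hb h1 N
      _ = Real.exp ((N : ℝ) * (p * (Real.exp (-t) - 1))) := (Real.exp_nat_mul _ N).symm
  calc ∑ k ∈ Finset.range (N + 1), (if (k : ℝ) ≤ a then binomPMF N p k else 0)
      ≤ (p * Real.exp (-t) + (1 - p)) ^ N * Real.exp (t * a) := by rw [← step2]; exact step1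
    _ ≤ Real.exp ((N : ℝ) * (p * (Real.exp (-t) - 1))) * Real.exp (t * a) :=
        mul_le_mul_of_nonneg_right step3 (Real.exp_pos _).le
    _ = Real.exp ((N : ℝ) * (p * (Real.exp (-t) - 1)) + t * a) := by
        rw [← Real.exp_add]

lemma exp_quad {x : ℝ} (hx : |x| ≤ 1) : Real.exp x ≤ 1 + x + (3 / 4) * x ^ 2 := by
  have h := Real.exp_bound hx (n := 2) (by norm_num)
  have h2 : ∑ m ∈ Finset.range 2, x ^ m / (m.factorial : ℝ) = 1 + x := by
    simp [Finset.sum_range_succ]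
  rw [h2] at h
  have h3 : |x| ^ 2 = x ^ 2 := sq_abs x
  have := abs_le.mp h
  norm_num [h3] at this ⊢
  linarith [this.2]

set_option maxHeartbeats 2000000 in
lemma key (p q : ℝ) (N : ℕ) (hp : 0 ≤ p) (hpq : p < q) (hq : q ≤ 1) (hs : p + q ≤ 1) :
    (∑ k ∈ Finset.range (N + 1), ∑ l ∈ Finset.range (N + 1),
        if k < l then binomPMF N p k * binomPMF N q l else 0)
      ≥ (1 - Real.exp (-(chiSq p q * N / 12))) ^ 2 := by
  have hq0 : 0 < q := lt_of_le_of_lt hp hpq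
  have hp1 : p ≤ 1 := le_trans hpq.le hq
  set μ : ℝ := (p + q) / 2 with hμdef
  set δ : ℝ := (q - p) / 2 with hδdef
  have hδ0 : 0 < δ := by rw [hδdef]; linarith
  have hμpos : 0 < μ := by rw [hμdef]; linarith
  have hμhalf : μ ≤ 1 / 2 := by rw [hμdef]; linarith
  have hδμ : δ ≤ μ := by rw [hδdef, hμdef]; linarith
  have hqμ : q = μ + δ := by rw [hδdef, hμdef]; ring
  have hpμ : p = μ - δ := by rw [hδdef, hμdef]; ring
  have hμ1 : μ < 1 := by linarith
  have hμne : μ ≠ 0 := hμpos.ne'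
  have hqne : q ≠ 0 := hq0.ne'
  have hc : chiSq p q = δ ^ 2 / (μ * (1 - μ)) := by
    unfold chiSq
    have h4 : (p + q) * (2 - (p + q)) = 4 * (μ * (1 - μ)) := by rw [hμdef]; ring
    have h5 : (p - q) ^ 2 = 4 * δ ^ 2 := by rw [hδdef]; ring
    rw [h4, h5, mul_div_mul_left _ _ (by norm_num : (4:ℝ) ≠ 0)]
  have hcnn : 0 ≤ chiSq p q := by rw [hc]; exact div_nonneg (sq_nonneg δ) (by nlinarith)
  set a : ℝ := (N : ℝ) * μ with hadef
  set E : ℝ := Real.exp (-(chiSq p q * N / 12)) with hEdef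
  have hE1 : E ≤ 1 := by
    rw [hEdef, Real.exp_le_one_iff]
    have : 0 ≤ chiSq p q * N / 12 := by positivity
    linarith
  -- upper tail for p
  have hT1 : ∑ k ∈ Finset.range (N + 1), (if a ≤ (k : ℝ) then binomPMF N p k else 0) ≤ E := by
    set t : ℝ := 2 * δ / (3 * μ) with htdef
    have ht0 : 0 ≤ t := by positivity
    have ht23 : t ≤ 2 / 3 := by
      rw [htdef, div_le_iff₀ (by positivity)]; nlinarith
    refine le_trans (tail_upper N p t a hp hp1 ht0) ?_
    rw [hEdef]
    apply Real.exp_le_exp.mpr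
    have hexp : Real.exp t ≤ 1 + t + (3 / 4) * t ^ 2 :=
      exp_quad (by rw [abs_of_nonneg ht0]; linarith)
    have hcore : p * (Real.exp t - 1) - t * μ ≤ -(chiSq p q / 12) := by
      rw [hc]
      have h1 : p * (Real.exp t - 1) ≤ p * t + (3 / 4) * μ * t ^ 2 := by
        nlinarith [sq_nonneg t]
      have hval : p * t + (3 / 4) * μ * t ^ 2 - t * μ = -(δ ^ 2 / (3 * μ)) := by
        rw [htdef]; field_simp; rw [hpμ]; ring
      have hcmp : -(δ ^ 2 / (3 * μ)) ≤ -(δ ^ 2 / (μ * (1 - μ)) / 12) := by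
        rw [neg_le_neg_iff, div_div, div_le_div_iff₀ (by nlinarith) (by positivity)]
        nlinarith [mul_nonneg (sq_nonneg δ)
          (show (0:ℝ) ≤ μ * (1 - μ) * 12 - 3 * μ by
            nlinarith [mul_nonneg hμpos.le (by linarith : (0:ℝ) ≤ 3 - 4 * μ)])]
      linarith
    calc (N : ℝ) * (p * (Real.exp t - 1)) - t * a
        = (N : ℝ) * (p * (Real.exp t - 1) - t * μ) := by rw [hadef]; ring
      _ ≤ (N : ℝ) * (-(chiSq p q / 12)) := mul_le_mul_of_nonneg_left hcore (Nat.cast_nonneg N)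
      _ = -(chiSq p q * N / 12) := by ring
  -- lower tail for q
  have hT2 : ∑ l ∈ Finset.range (N + 1), (if (l : ℝ) ≤ a then binomPMF N q l else 0) ≤ E := by
    set s : ℝ := 2 * δ / (3 * q) with hsdef
    have hs0 : 0 ≤ s := by positivity
    have hs13 : s ≤ 1 / 3 := by
      have h2δq : 2 * δ ≤ q := by rw [hqμ]; linarith
      rw [hsdef, div_le_iff₀ (by positivity)]; linarith
    refine le_trans (tail_lower N q s a hq0.le hq hs0) ?_
    rw [hEdef]
    apply Real.exp_le_exp.mpr
    have hexp : Real.exp (-s) ≤ 1 - s + (3 / 4) * s ^ 2 := by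
      have := exp_quad (x := -s) (by rw [abs_neg, abs_of_nonneg hs0]; linarith)
      calc Real.exp (-s) ≤ 1 + (-s) + (3 / 4) * (-s) ^ 2 := this
        _ = 1 - s + (3 / 4) * s ^ 2 := by ring
    have hcore : q * (Real.exp (-s) - 1) + s * μ ≤ -(chiSq p q / 12) := by
      rw [hc]
      have h1 : q * (Real.exp (-s) - 1) ≤ q * (-s) + (3 / 4) * q * s ^ 2 := by
        nlinarith [sq_nonneg s]
      have hval : q * (-s) + (3 / 4) * q * s ^ 2 + s * μ = -(δ ^ 2 / (3 * q)) := by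
        rw [hsdef]; field_simp; rw [hqμ]; ring
      have hcmp : -(δ ^ 2 / (3 * q)) ≤ -(δ ^ 2 / (μ * (1 - μ)) / 12) := by
        rw [neg_le_neg_iff, div_div, div_le_div_iff₀ (by nlinarith) (by positivity)]
        have hq2μ : q ≤ 2 * μ := by rw [hqμ]; linarith
        nlinarith [mul_nonneg (sq_nonneg δ)
          (show (0:ℝ) ≤ μ * (1 - μ) * 12 - 3 * q by
            nlinarith [mul_nonneg hμpos.le (by linarith : (0:ℝ) ≤ 1 - 2 * μ)])]
      linarith
    calc (N : ℝ) * (q * (Real.exp (-s) - 1)) + s * a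
        = (N : ℝ) * (q * (Real.exp (-s) - 1) + s * μ) := by rw [hadef]; ring
      _ ≤ (N : ℝ) * (-(chiSq p q / 12)) := mul_le_mul_of_nonneg_left hcore (Nat.cast_nonneg N)
      _ = -(chiSq p q * N / 12) := by ring
  -- factors
  set F1 : ℝ := ∑ k ∈ Finset.range (N + 1), (if (k : ℝ) < a then binomPMF N p k else 0) with hF1def
  set F2 : ℝ := ∑ l ∈ Finset.range (N + 1), (if a ≤ (l : ℝ) then binomPMF N q l else 0) with hF2def
  have hF1comp : F1 + ∑ k ∈ Finset.range (N + 1), (if a ≤ (k : ℝ) then binomPMF N p k else 0) = 1 := by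
    rw [hF1def, ← Finset.sum_add_distrib, ← binomPMF_sum N p]
    refine Finset.sum_congr rfl fun k _ => ?_
    by_cases h : (k : ℝ) < a
    · rw [if_pos h, if_neg (not_le.mpr h), add_zero]
    · rw [if_neg h, if_pos (not_lt.mp h), zero_add]
  have hF2comp : (∑ l ∈ Finset.range (N + 1), (if (l : ℝ) < a then binomPMF N q l else 0)) + F2 = 1 := by
    rw [hF2def, ← Finset.sum_add_distrib, ← binomPMF_sum N q]
    refine Finset.sum_congr rfl fun k _ => ?_
    by_cases h : (k : ℝ) < a
    · rw [if_pos h, if_neg (not_le.mpr h), add_zero]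
    · rw [if_neg h, if_pos (not_lt.mp h), zero_add]
  have hF1 : 1 - E ≤ F1 := by linarith
  have hF2 : 1 - E ≤ F2 := by
    have hmono : (∑ l ∈ Finset.range (N + 1), (if (l : ℝ) < a then binomPMF N q l else 0))
        ≤ ∑ l ∈ Finset.range (N + 1), (if (l : ℝ) ≤ a then binomPMF N q l else 0) := by
      refine Finset.sum_le_sum fun l _ => ?_
      by_cases h : (l : ℝ) < a
      · rw [if_pos h, if_pos h.le]
      · rw [if_neg h]
        split_ifs with h2
        · exact binomPMF_nonneg hq0.le hq l
        · exact le_refl 0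
    linarith
  have hF1nn : 0 ≤ F1 := by
    rw [hF1def]
    refine Finset.sum_nonneg fun k _ => ?_
    split_ifs with h
    · exact binomPMF_nonneg hp hp1 k
    · exact le_refl 0
  have hprod : F1 * F2 ≤ ∑ k ∈ Finset.range (N + 1), ∑ l ∈ Finset.range (N + 1),
      if k < l then binomPMF N p k * binomPMF N q l else 0 := by
    rw [hF1def, hF2def, Finset.sum_mul_sum]
    refine Finset.sum_le_sum fun k _ => Finset.sum_le_sum fun l _ => ?_
    by_cases h1 : (k : ℝ) < a
    · by_cases h2 : a ≤ (l : ℝ)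
      · have hkl : k < l := by
          have : (k : ℝ) < (l : ℝ) := lt_of_lt_of_le h1 h2
          exact_mod_cast this
        rw [if_pos h1, if_pos h2, if_pos hkl]
      · rw [if_neg h2, mul_zero]
        split_ifs with h3
        · exact mul_nonneg (binomPMF_nonneg hp hp1 k) (binomPMF_nonneg hq0.le hq l)
        · exact le_refl 0
    · rw [if_neg h1, zero_mul]
      split_ifs with h3
      · exact mul_nonneg (binomPMF_nonneg hp hp1 k) (binomPMF_nonneg hq0.le hq l)
      · exact le_refl 0
  have hsq : (1 - E) ^ 2 ≤ F1 * F2 := by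
    rw [sq]
    exact mul_le_mul hF1 hF2 (by linarith) hF1nn
  exact le_trans hsq hprod

lemma chiSq_symm (p q : ℝ) : chiSq (1 - q) (1 - p) = chiSq p q := by
  unfold chiSq
  ring_nf

lemma DS_symm (p q : ℝ) (N : ℕ) :
    (∑ k ∈ Finset.range (N + 1), ∑ l ∈ Finset.range (N + 1),
        if k < l then binomPMF N p k * binomPMF N q l else 0)
    = ∑ k ∈ Finset.range (N + 1), ∑ l ∈ Finset.range (N + 1),
        if k < l then binomPMF N (1 - q) k * binomPMF N (1 - p) l else 0 := by
  have reflect : ∀ f : ℕ → ℝ,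
      ∑ j ∈ Finset.range (N + 1), f (N - j) = ∑ j ∈ Finset.range (N + 1), f j := by
    intro f
    have h := Finset.sum_range_reflect f (N + 1)
    simpa using h
  calc (∑ k ∈ Finset.range (N + 1), ∑ l ∈ Finset.range (N + 1),
          if k < l then binomPMF N p k * binomPMF N q l else 0)
      = ∑ k ∈ Finset.range (N + 1), ∑ l ∈ Finset.range (N + 1),
          if N - k < N - l then binomPMF N p (N - k) * binomPMF N q (N - l) else 0 := by
        rw [← reflect (fun k => ∑ l ∈ Finset.range (N + 1),
          if k < l then binomPMF N p k * binomPMF N q l else 0)]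
        refine Finset.sum_congr rfl fun k _ => ?_
        exact (reflect (fun l =>
          if N - k < l then binomPMF N p (N - k) * binomPMF N q l else 0)).symm
    _ = ∑ k ∈ Finset.range (N + 1), ∑ l ∈ Finset.range (N + 1),
          if l < k then binomPMF N (1 - p) k * binomPMF N (1 - q) l else 0 := by
        refine Finset.sum_congr rfl fun k hk => Finset.sum_congr rfl fun l hl => ?_
        have hk' : k ≤ N := Nat.lt_succ_iff.mp (Finset.mem_range.mp hk)
        have hl' : l ≤ N := Nat.lt_succ_iff.mp (Finset.mem_range.mp hl)
        have hiff : (N - k < N - l) ↔ l < k := by omega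
        by_cases h : l < k
        · rw [if_pos (hiff.mpr h), if_pos h, binomPMF_reflect hk' p, binomPMF_reflect hl' q]
        · rw [if_neg (fun hc => h (hiff.mp hc)), if_neg h]
    _ = ∑ k ∈ Finset.range (N + 1), ∑ l ∈ Finset.range (N + 1),
          if k < l then binomPMF N (1 - q) k * binomPMF N (1 - p) l else 0 := by
        rw [Finset.sum_comm]
        refine Finset.sum_congr rfl fun k _ => Finset.sum_congr rfl fun l _ => ?_
        split_ifs with h
        · ring
        · rfl

theorem stmt_11 (p q : ℝ) (N : ℕ) (hp : 0 ≤ p) (hpq : p < q) (hq : q ≤ 1) :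
    (∑ k ∈ Finset.range (N + 1), ∑ l ∈ Finset.range (N + 1),
        if k < l then binomPMF N p k * binomPMF N q l else 0)
      ≥ (1 - Real.exp (-(chiSq p q * N / 12))) ^ 2 := by
  by_cases hs : p + q ≤ 1
  · exact key p q N hp hpq hq hs
  · rw [DS_symm p q N, show chiSq p q = chiSq (1 - q) (1 - p) from (chiSq_symm p q).symm]
    exact key (1 - q) (1 - p) N (by linarith) (by linarith) (by linarith) (by linarith)
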